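/- Let G be a compact Lie group acting orthogonally on V with section Σ. Then the generalized Weyl group W(Σ) = N_G(Σ)/Z_G(Σ) is finite. -/

import Mathlib

open scoped Pointwise RealInnerProductSpace

/-- The set of vectors tangent at `x` to the orbit `G·x`: derivatives at `0` of curves
through `x` lying in the orbit. -/
def orbitTangent (G : Type*) [Group G] {V : Type*} [NormedAddCommGroup V]
    [InnerProductSpace ℝ V] [MulAction G V] (x : V) : Set V :=
  {v | ∃ c : ℝ → V, (∀ t, c t ∈ MulAction.orbit G x) ∧ c 0 = x ∧ HasDerivAt c v 0}

/-- A linear subspace `Σ ⊆ V` is a *section* for the action of `G` if it meets every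
orbit and at each of its points it is orthogonal to the orbit direction. -/
def IsSection (G : Type*) [Group G] {V : Type*} [NormedAddCommGroup V]
    [InnerProductSpace ℝ V] [MulAction G V] (Sig : Submodule ℝ V) : Prop :=
  (∀ v : V, ∃ s ∈ Sig, s ∈ MulAction.orbit G v) ∧
  (∀ x ∈ Sig, ∀ v ∈ orbitTangent G x, ∀ s ∈ Sig, ⟪v, s⟫ = 0)

/-!
The restrictions of the elements of `N_G(Σ)` to `Σ` form a compact group `T` of linear isometries
of `Σ`, and `W(Σ)` embeds into `T`. If `T` were infinite it would accumulate at the identity, and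
the usual construction behind the closed subgroup theorem (powers `w ^ ⌊t / ‖w - 1‖⌋` of elements
`w → 1`) yields a curve in `T` through the identity with a nonzero velocity `U`. Applied to a point
`x ∈ Σ`, this curve stays in the orbit `G • x`, so `U x` is tangent to the orbit; but `U x ∈ Σ`,
and `Σ` is orthogonal to the orbits, so `U x = 0` for every `x`, a contradiction.
-/

open Filter Topology

theorem hasDerivAt_of_eventually_norm_sub_le_mul_sq {E : Type*} [NormedAddCommGroup E]
    [NormedSpace ℝ E] {f : ℝ → E} {v : E} {x C : ℝ}
    (h : ∀ᶠ s in 𝓝 0, ‖f (x + s) - f x - s • v‖ ≤ C * s ^ 2) : HasDerivAt f v x := by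
  rw [hasDerivAt_iff_isLittleO_nhds_zero]
  refine (Asymptotics.IsBigO.of_bound C ?_).trans_isLittleO
    (Asymptotics.isLittleO_pow_id one_lt_two)
  simpa only [norm_pow, Real.norm_eq_abs, sq_abs] using h

section NormedRing

variable {R : Type*} [NormedRing R]

theorem norm_one_add_pow_sub_one_sub_nsmul_le (A : R) (k : ℕ) :
    ‖(1 + A) ^ k - 1 - k • A‖ ≤ (k * ‖A‖) ^ 2 * (1 + ‖A‖) ^ k := by
  induction k with
  | zero => simp
  | succ k ih =>
    set E := (1 + A) ^ k - 1 - k • A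
    have hstep : (1 + A) ^ (k + 1) - 1 - (k + 1) • A = E + A * E + k • (A * A) := by
      simp only [E, pow_succ', mul_sub, mul_one, one_mul, mul_smul_comm, add_mul, succ_nsmul]
      abel
    have hA := norm_nonneg A
    have hgrowth : (k : ℝ) * (‖A‖ * ‖A‖) ≤ (2 * k + 1) * ‖A‖ ^ 2 * (1 + ‖A‖) ^ (k + 1) := by
      have h1 : (1 : ℝ) ≤ (1 + ‖A‖) ^ (k + 1) := one_le_pow₀ (by linarith)
      have h2 : (k : ℝ) * (‖A‖ * ‖A‖) ≤ (2 * k + 1) * ‖A‖ ^ 2 := by nlinarith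
      nlinarith [mul_le_mul_of_nonneg_left h1 (by positivity : (0 : ℝ) ≤ (2 * k + 1) * ‖A‖ ^ 2)]
    calc ‖(1 + A) ^ (k + 1) - 1 - (k + 1) • A‖
        ≤ ‖E‖ + ‖A‖ * ‖E‖ + k * (‖A‖ * ‖A‖) := by
          rw [hstep]
          refine (norm_add_le _ _).trans (add_le_add ?_ ?_)
          · exact (norm_add_le _ _).trans (by gcongr; exact norm_mul_le _ _)
          · exact norm_nsmul_le.trans (by gcongr; exact norm_mul_le _ _)
      _ = (1 + ‖A‖) * ‖E‖ + k * (‖A‖ * ‖A‖) := by ring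
      _ ≤ (1 + ‖A‖) * ((k * ‖A‖) ^ 2 * (1 + ‖A‖) ^ k) + k * (‖A‖ * ‖A‖) := by gcongr
      _ ≤ ((k + 1 : ℕ) * ‖A‖) ^ 2 * (1 + ‖A‖) ^ (k + 1) := by
          push_cast
          linear_combination hgrowth

theorem MonoidHom.exists_seq_tendsto_one_of_infinite_range {K : Type*} [Group K] (Φ : K →* R)
    (hc : IsCompact (Set.range Φ)) (hinf : (Set.range Φ).Infinite) :
    ∃ g : ℕ → K, (∀ n, Φ (g n) ≠ 1) ∧ Tendsto (fun n ↦ Φ (g n)) atTop (𝓝 1) := by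
  obtain ⟨_, ⟨a, rfl⟩, hacc⟩ := hinf.exists_accPt_of_subset_isCompact hc subset_rfl
  obtain ⟨y, hy, hyne⟩ := frequently_iff_seq_forall.mp (accPt_iff_frequently.mp hacc)
  choose g hg using fun n ↦ (hyne n).2
  refine ⟨fun n ↦ a⁻¹ * g n, fun n h ↦ (hyne n).1 ?_, ?_⟩
  · rw [← hg n, ← mul_inv_cancel_left a (g n), map_mul, h, mul_one]
  · simpa [← map_mul, ← hg, Function.comp_def] using (tendsto_const_nhds (x := Φ a⁻¹)).mul hy

variable [NormedAlgebra ℝ R]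

/-- The powers `w n ^ ⌊t / ε n⌋₊` approach `1 + t • U` up to `t ^ 2 * exp t`. -/
theorem exists_mem_norm_sub_one_add_smul_le {T : Set R} (hT : IsCompact T)
    (hpow : ∀ f ∈ T, ∀ k : ℕ, f ^ k ∈ T) {w : ℕ → R} {ε : ℕ → ℝ} {U : R}
    (hwT : ∀ n, w n ∈ T) (hε : ∀ n, 0 < ε n) (hε0 : Tendsto ε atTop (𝓝 0))
    (hwε : ∀ n, ‖w n - 1‖ ≤ ε n) (hU : Tendsto (fun n ↦ (ε n)⁻¹ • (w n - 1)) atTop (𝓝 U))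
    {t : ℝ} (ht : 0 ≤ t) : ∃ f ∈ T, ‖f - (1 + t • U)‖ ≤ t ^ 2 * Real.exp t := by
  set k : ℕ → ℕ := fun n ↦ ⌊t / ε n⌋₊
  have hkε_le : ∀ n, (k n : ℝ) * ε n ≤ t := fun n ↦
    (le_div_iff₀ (hε n)).mp (Nat.floor_le (div_nonneg ht (hε n).le))
  have hkε : Tendsto (fun n ↦ (k n : ℝ) * ε n) atTop (𝓝 t) := by
    refine tendsto_of_tendsto_of_tendsto_of_le_of_le (by simpa using hε0.const_sub t)
      tendsto_const_nhds (fun n ↦ ?_) hkε_le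
    have := (div_lt_iff₀ (hε n)).mp (Nat.lt_floor_add_one (t / ε n))
    dsimp only
    linarith
  have hlin : Tendsto (fun n ↦ k n • (w n - 1) - t • U) atTop (𝓝 0) := by
    have h := hkε.smul hU
    rw [← sub_self (t • U)]
    refine (h.sub_const (t • U)).congr fun n ↦ ?_
    rw [smul_smul, mul_assoc, mul_inv_cancel₀ (hε n).ne', mul_one, Nat.cast_smul_eq_nsmul]
  have hquad : ∀ n, ‖w n ^ k n - 1 - k n • (w n - 1)‖ ≤ t ^ 2 * Real.exp t := by
    intro n
    have hkA : (k n : ℝ) * ‖w n - 1‖ ≤ t :=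
      (mul_le_mul_of_nonneg_left (hwε n) (k n).cast_nonneg).trans (hkε_le n)
    have h := norm_one_add_pow_sub_one_sub_nsmul_le (w n - 1) (k n)
    rw [add_sub_cancel] at h
    refine h.trans ?_
    gcongr
    calc (1 + ‖w n - 1‖) ^ k n ≤ Real.exp ‖w n - 1‖ ^ k n := by
          gcongr; linarith [Real.add_one_le_exp ‖w n - 1‖]
      _ = Real.exp (k n * ‖w n - 1‖) := by rw [← Real.exp_nat_mul]
      _ ≤ Real.exp t := by gcongr
  set x := 1 + t • U
  have hdist : Metric.infDist x T ≤ t ^ 2 * Real.exp t := by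
    refine ge_of_tendsto (by simpa only [Function.comp_def, norm_zero, add_zero] using
      (tendsto_norm.comp hlin).const_add (t ^ 2 * Real.exp t)) (Eventually.of_forall fun n ↦ ?_)
    calc Metric.infDist x T ≤ ‖w n ^ k n - x‖ := by
          rw [← dist_eq_norm, dist_comm]; exact Metric.infDist_le_dist_of_mem (hpow _ (hwT n) _)
      _ = ‖(w n ^ k n - 1 - k n • (w n - 1)) + (k n • (w n - 1) - t • U)‖ := by
          congr 1; simp only [x]; abel
      _ ≤ ‖w n ^ k n - 1 - k n • (w n - 1)‖ + ‖k n • (w n - 1) - t • U‖ := norm_add_le _ _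
      _ ≤ t ^ 2 * Real.exp t + ‖k n • (w n - 1) - t • U‖ := by gcongr; exact hquad n
  obtain ⟨f, hfT, hf⟩ := hT.exists_infDist_eq_dist ⟨_, hwT 0⟩ x
  exact ⟨f, hfT, by rwa [← dist_eq_norm, dist_comm, ← hf]⟩

variable [FiniteDimensional ℝ R] {K : Type*} [Group K] (Φ : K →* R)

theorem MonoidHom.exists_norm_eq_one_forall_norm_sub_one_add_smul_le
    (hc : IsCompact (Set.range Φ)) (hinf : (Set.range Φ).Infinite) (hnorm : ∀ g, ‖Φ g‖ ≤ 1) :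
    ∃ U : R, ‖U‖ = 1 ∧ ∀ t : ℝ, ∃ a : K, ‖Φ a - (1 + t • U)‖ ≤ t ^ 2 * Real.exp |t| := by
  obtain ⟨g, hg1, hg⟩ := Φ.exists_seq_tendsto_one_of_infinite_range hc hinf
  set ε : ℕ → ℝ := fun n ↦ ‖Φ (g n) - 1‖
  have hε : ∀ n, 0 < ε n := fun n ↦ norm_pos_iff.mpr (sub_ne_zero.mpr (hg1 n))
  have hε0 : Tendsto ε atTop (𝓝 0) := tendsto_iff_norm_sub_tendsto_zero.mp hg
  have hu : ∀ n, (ε n)⁻¹ • (Φ (g n) - 1) ∈ Metric.sphere (0 : R) 1 := fun n ↦ by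
    rw [mem_sphere_zero_iff_norm, norm_smul, norm_inv, Real.norm_of_nonneg (hε n).le,
      inv_mul_cancel₀ (hε n).ne']
  obtain ⟨U, hU, ψ, hψ, hUlim⟩ := (isCompact_sphere (0 : R) 1).tendsto_subseq hu
  have hεψ := hε0.comp hψ.tendsto_atTop
  have hpow : ∀ f ∈ Set.range Φ, ∀ k : ℕ, f ^ k ∈ Set.range Φ := by
    rintro _ ⟨a, rfl⟩ k
    exact ⟨a ^ k, map_pow Φ a k⟩
  -- for `t < 0`, run the construction on the inverses, whose direction is `-U`
  have hinv_le : ∀ n, ‖Φ (g n)⁻¹ - 1‖ ≤ ε n := fun n ↦ by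
    have : Φ (g n)⁻¹ - 1 = -(Φ (g n)⁻¹ * (Φ (g n) - 1)) := by
      rw [mul_sub, ← map_mul, inv_mul_cancel, map_one, mul_one, neg_sub]
    rw [this, norm_neg]
    exact (norm_mul_le _ _).trans (mul_le_of_le_one_left (norm_nonneg _) (hnorm _))
  have hinv_tendsto : Tendsto (fun n ↦ Φ (g (ψ n))⁻¹) atTop (𝓝 1) :=
    tendsto_iff_norm_sub_tendsto_zero.mpr
      (squeeze_zero (fun _ ↦ norm_nonneg _) (fun n ↦ hinv_le (ψ n)) hεψ)
  have hinv_dir : Tendsto (fun n ↦ (ε (ψ n))⁻¹ • (Φ (g (ψ n))⁻¹ - 1)) atTop (𝓝 (-U)) := by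
    have h := (hinv_tendsto.mul hUlim).neg
    rw [one_mul] at h
    refine h.congr fun n ↦ ?_
    rw [Function.comp_apply, mul_smul_comm, mul_sub, ← map_mul, inv_mul_cancel, map_one, mul_one,
      ← smul_neg, neg_sub]
  refine ⟨U, mem_sphere_zero_iff_norm.mp hU, fun t ↦ ?_⟩
  rcases le_total 0 t with ht | ht
  · obtain ⟨_, ⟨a, rfl⟩, ha⟩ := exists_mem_norm_sub_one_add_smul_le hc hpow
      (fun n ↦ ⟨g (ψ n), rfl⟩) (fun n ↦ hε (ψ n)) hεψ (fun n ↦ le_rfl) hUlim ht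
    exact ⟨a, by rwa [abs_of_nonneg ht]⟩
  · obtain ⟨_, ⟨a, rfl⟩, ha⟩ := exists_mem_norm_sub_one_add_smul_le hc hpow
      (fun n ↦ ⟨(g (ψ n))⁻¹, rfl⟩) (fun n ↦ hε (ψ n)) hεψ (fun n ↦ hinv_le (ψ n)) hinv_dir
      (neg_nonneg.mpr ht)
    rw [neg_smul_neg, neg_sq] at ha
    exact ⟨a, by rwa [abs_of_nonpos ht]⟩

theorem MonoidHom.exists_hasDerivAt_of_infinite_range (hc : IsCompact (Set.range Φ))
    (hinf : (Set.range Φ).Infinite) (hnorm : ∀ g, ‖Φ g‖ ≤ 1) :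
    ∃ U : R, U ≠ 0 ∧ ∃ γ : ℝ → K, Φ (γ 0) = 1 ∧ HasDerivAt (fun t ↦ Φ (γ t)) U 0 := by
  obtain ⟨U, hU, happrox⟩ := Φ.exists_norm_eq_one_forall_norm_sub_one_add_smul_le hc hinf hnorm
  choose γ hγ using happrox
  have hγ0 : Φ (γ 0) = 1 := by simpa [sub_eq_zero] using hγ 0
  refine ⟨U, norm_ne_zero_iff.mp (by simp [hU]), γ, hγ0,
    hasDerivAt_of_eventually_norm_sub_le_mul_sq (C := Real.exp 1) ?_⟩
  filter_upwards [Metric.closedBall_mem_nhds (0 : ℝ) one_pos] with s hs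
  rw [mem_closedBall_zero_iff, Real.norm_eq_abs] at hs
  calc ‖Φ (γ (0 + s)) - Φ (γ 0) - s • U‖ = ‖Φ (γ s) - (1 + s • U)‖ := by
        rw [zero_add, hγ0, sub_sub]
    _ ≤ s ^ 2 * Real.exp |s| := hγ s
    _ ≤ Real.exp 1 * s ^ 2 := by rw [mul_comm]; gcongr

end NormedRing

theorem MonoidHom.finite_quotient_ker_of_finite_range {K M : Type*} [Group K] [Monoid M]
    (Φ : K →* M) (h : (Set.range Φ).Finite) : Finite (K ⧸ Φ.ker) := by
  rw [← Φ.ker_toHomUnits]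
  refine (Set.finite_range_iff (f := fun q ↦ (QuotientGroup.kerLift Φ.toHomUnits q : M))
    (Units.val_injective.comp (QuotientGroup.kerLift_injective _))).mp (h.subset ?_)
  rintro _ ⟨q, rfl⟩
  induction q using QuotientGroup.induction_on with
  | H a => exact ⟨a, rfl⟩

theorem isClosed_stabilizer {G α : Type*} [Group G] [TopologicalSpace G] [ContinuousInv G]
    [TopologicalSpace α] [MulAction G α] [ContinuousSMul G α] {s : Set α} (hs : IsClosed s) :
    IsClosed (MulAction.stabilizer G s : Set G) := by
  have hsub : IsClosed {g : G | g • s ⊆ s} := by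
    simp only [Set.smul_set_subset_iff, Set.ofPred_forall]
    exact isClosed_iInter fun x ↦ isClosed_iInter fun _ ↦
      hs.preimage (continuous_id.smul continuous_const)
  have heq : (MulAction.stabilizer G s : Set G) =
      {g | g • s ⊆ s} ∩ (· ⁻¹) ⁻¹' {g | g • s ⊆ s} := by
    ext g
    simp only [SetLike.mem_coe, MulAction.mem_stabilizer_iff, Set.mem_inter_iff, Set.mem_ofPred_eq,
      Set.mem_preimage, subset_antisymm_iff, Set.subset_smul_set_iff]
  rw [heq]
  exact hsub.inter (hsub.preimage continuous_inv)

section StabilizerToEnd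

variable {G V : Type*} [Group G] [NormedAddCommGroup V] [NormedSpace ℝ V] [MulAction G V]
  (Sig : Submodule ℝ V)

variable [FiniteDimensional ℝ V] (hlin : ∀ g : G, IsLinearMap ℝ (fun v : V ↦ g • v))

noncomputable def stabilizerToEnd :
    MulAction.stabilizer G (Sig : Set V) →* (Sig →L[ℝ] Sig) where
  toFun g := LinearMap.toContinuousLinearMap
    ((IsLinearMap.mk' _ (hlin g)).restrict fun v ↦ (MulAction.mem_stabilizer_set.mp g.2 v).mpr)
  map_one' := by ext; simp
  map_mul' a b := by ext v; exact mul_smul (a : G) b (v : V)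

theorem coe_stabilizerToEnd_apply (g : MulAction.stabilizer G (Sig : Set V)) (v : Sig) :
    (stabilizerToEnd Sig hlin g v : V) = (g : G) • (v : V) :=
  rfl

theorem norm_stabilizerToEnd_le (hiso : ∀ (g : G) (v : V), ‖g • v‖ = ‖v‖)
    (g : MulAction.stabilizer G (Sig : Set V)) : ‖stabilizerToEnd Sig hlin g‖ ≤ 1 :=
  ContinuousLinearMap.opNorm_le_bound _ zero_le_one fun v ↦ by
    rw [one_mul, ← Submodule.norm_coe, coe_stabilizerToEnd_apply, hiso, Submodule.norm_coe]

theorem continuous_stabilizerToEnd [TopologicalSpace G] [ContinuousSMul G V] :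
    Continuous (stabilizerToEnd Sig hlin) :=
  continuous_clm_apply.mpr fun _ ↦ (continuous_subtype_val.smul continuous_const).subtype_mk _

theorem ker_stabilizerToEnd :
    (stabilizerToEnd Sig hlin).ker =
      (fixingSubgroup G (Sig : Set V)).subgroupOf (MulAction.stabilizer G (Sig : Set V)) := by
  ext g
  simp only [MonoidHom.mem_ker, Subgroup.mem_subgroupOf, mem_fixingSubgroup_iff,
    ContinuousLinearMap.ext_iff, one_apply_eq_self, Subtype.ext_iff, coe_stabilizerToEnd_apply,
    Subtype.forall, SetLike.mem_coe]

end StabilizerToEnd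

theorem eq_zero_of_hasDerivAt_stabilizerToEnd {G V : Type*} [Group G] [NormedAddCommGroup V]
    [InnerProductSpace ℝ V] [FiniteDimensional ℝ V] [MulAction G V]
    {hlin : ∀ g : G, IsLinearMap ℝ (fun v : V ↦ g • v)} {Sig : Submodule ℝ V}
    (hSig : IsSection G Sig) {γ : ℝ → MulAction.stabilizer G (Sig : Set V)} {U : Sig →L[ℝ] Sig}
    (hγ0 : stabilizerToEnd Sig hlin (γ 0) = 1)
    (hγ : HasDerivAt (fun t ↦ stabilizerToEnd Sig hlin (γ t)) U 0) : U = 0 := by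
  ext x
  have hc : HasDerivAt (fun t ↦ (stabilizerToEnd Sig hlin (γ t) x : V)) (U x : V) 0 :=
    (Sig.subtypeL.comp (ContinuousLinearMap.apply ℝ Sig x)).hasFDerivAt.comp_hasDerivAt 0 hγ
  have htangent : (U x : V) ∈ orbitTangent G (x : V) :=
    ⟨_, fun t ↦ ⟨(γ t : G), rfl⟩, congrArg (fun f ↦ (f x : V)) hγ0, hc⟩
  simpa using inner_self_eq_zero.mp (hSig.2 x x.2 _ htangent _ (U x).2)

/-- The generalized Weyl group `W(Σ) = N_G(Σ)/Z_G(Σ)` of a section of an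
orthogonal representation of a compact Lie group is finite. -/
theorem weylGroup_finite
    {G V : Type*} [Group G] [TopologicalSpace G] [IsTopologicalGroup G] [CompactSpace G]
    [NormedAddCommGroup V] [InnerProductSpace ℝ V] [FiniteDimensional ℝ V]
    [MulAction G V] [ContinuousSMul G V]
    (hlin : ∀ g : G, IsLinearMap ℝ (fun v : V => g • v))
    (hiso : ∀ (g : G) (v : V), ‖g • v‖ = ‖v‖)
    (Sig : Submodule ℝ V) (hSig : IsSection G Sig) :
    Finite (MulAction.stabilizer G (Sig : Set V) ⧸
      (fixingSubgroup G (Sig : Set V)).subgroupOf (MulAction.stabilizer G (Sig : Set V))) := by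
  have : CompactSpace (MulAction.stabilizer G (Sig : Set V)) := isCompact_iff_compactSpace.mp
    (isClosed_stabilizer Sig.closed_of_finiteDimensional).isCompact
  rw [← ker_stabilizerToEnd Sig hlin]
  refine (stabilizerToEnd Sig hlin).finite_quotient_ker_of_finite_range
    (Set.not_infinite.mp fun hinf ↦ ?_)
  obtain ⟨U, hU, γ, hγ0, hγ⟩ := MonoidHom.exists_hasDerivAt_of_infinite_range (R := Sig →L[ℝ] Sig)
    (stabilizerToEnd Sig hlin) (isCompact_range (continuous_stabilizerToEnd Sig hlin)) hinf
    (norm_stabilizerToEnd_le Sig hlin hiso)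
  exact hU (eq_zero_of_hasDerivAt_stabilizerToEnd hSig hγ0 hγ)
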